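/- arXiv:2209.13110 — 2 statements merged into one kernel-verified Lean document; each statement's English description precedes it below -/
import Mathlib

section
/- Let f ∈ k[x,y,z] be homogeneous of degree d ≥ 2 with char k = 0. Set Δ_zz = f_xx f_yy − f_xy², Δ_ac = cofactors of the Hessian as usual. Then (d-1)²·f_x·f_y = z²·Δ_xy + xy·Δ_zz − xz·Δ_yz − yz·Δ_xz + d(d-1)·f_xy·f, where Δ_xy = f_xz f_yz − f_xy f_zz, Δ_yz = f_xy f_xz − f_xx f_yz, Δ_xz = f_xy f_yz − f_xz f_yy. -/
open MvPolynomial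

noncomputable def dX {k : Type*} [CommSemiring k] (f : MvPolynomial (Fin 3) k) :
    MvPolynomial (Fin 3) k := pderiv 0 f
noncomputable def dY {k : Type*} [CommSemiring k] (f : MvPolynomial (Fin 3) k) :
    MvPolynomial (Fin 3) k := pderiv 1 f
noncomputable def dZ {k : Type*} [CommSemiring k] (f : MvPolynomial (Fin 3) k) :
    MvPolynomial (Fin 3) k := pderiv 2 f

/-! Write `H` for the Hessian of `f` and `v = (x, y, z)`. Euler's identity for the first partials,
`(d - 1) f_i = (H v)_i`, turns the left side into `(H v)_x (H v)_y`, and Euler's identity applied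
twice gives `vᵀ H v = d (d - 1) f`. The identity then says that
`(H v)_x (H v)_y - f_xy vᵀ H v` is the stated combination of cofactors, which is a polynomial identity
in the entries of `H` and `v`. -/

namespace MvPolynomial

variable {σ R : Type*}

theorem pderiv_comm [CommRing R] (i j : σ) (f : MvPolynomial σ R) :
    pderiv i (pderiv j f) = pderiv j (pderiv i f) := by
  classical
  have hbracket : ⁅pderiv (R := R) i, pderiv (R := R) j⁆ = 0 := by
    refine derivation_ext fun l => ?_
    rw [Derivation.commutator_apply, pderiv_X, pderiv_X]
    simp [Pi.single_apply, apply_ite]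
  rw [← sub_eq_zero, ← Derivation.commutator_apply, hbracket, Derivation.zero_apply]

theorem IsHomogeneous.sum_X_mul_pderiv_pderiv [CommRing R] [Fintype σ] {φ : MvPolynomial σ R}
    {n : ℕ} (h : φ.IsHomogeneous n) (i : σ) :
    ∑ j, X j * pderiv j (pderiv i φ) = C ((n : R) - 1) * pderiv i φ := by
  cases n with
  | zero =>
    rw [← totalDegree_zero_iff_isHomogeneous, totalDegree_eq_zero_iff_eq_C] at h
    rw [h]
    simp
  | succ m =>
    rw [h.pderiv.sum_X_mul_pderiv, nsmul_eq_mul]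
    simp

end MvPolynomial

theorem stmt6_general {k : Type*} [Field k] (d : ℕ)
    (f : MvPolynomial (Fin 3) k) (hf : f.IsHomogeneous d) :
    C (((d : k) - 1) ^ 2) * dX f * dY f
      = X 2 ^ 2 * (dZ (dX f) * dZ (dY f) - dY (dX f) * dZ (dZ f))
        + X 0 * X 1 * (dX (dX f) * dY (dY f) - dY (dX f) ^ 2)
        - X 0 * X 2 * (dY (dX f) * dZ (dX f) - dX (dX f) * dZ (dY f))
        - X 1 * X 2 * (dY (dX f) * dZ (dY f) - dZ (dX f) * dY (dY f))
        + C ((d : k) * ((d : k) - 1)) * dY (dX f) * f := by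
  have euler := hf.sum_X_mul_pderiv
  have euler_x := hf.sum_X_mul_pderiv_pderiv 0
  have euler_y := hf.sum_X_mul_pderiv_pderiv 1
  have euler_z := hf.sum_X_mul_pderiv_pderiv 2
  simp only [Fin.sum_univ_three, nsmul_eq_mul, ← map_natCast C] at euler euler_x euler_y euler_z
  rw [pderiv_comm 0 1] at euler_y
  rw [pderiv_comm 0 2, pderiv_comm 1 2] at euler_z
  simp only [dX, dY, dZ, map_pow, map_mul]
  linear_combination
    -(X 0 * pderiv 1 (pderiv 0 f) + X 1 * pderiv 1 (pderiv 1 f) + X 2 * pderiv 2 (pderiv 1 f))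
      * euler_x - C ((d : k) - 1) * pderiv 0 f * euler_y
    + pderiv 1 (pderiv 0 f) * (X 0 * euler_x + X 1 * euler_y + X 2 * euler_z)
    + C ((d : k) - 1) * pderiv 1 (pderiv 0 f) * euler

theorem stmt6 {k : Type*} [Field k] [CharZero k] (d : ℕ) (hd : 2 ≤ d)
    (f : MvPolynomial (Fin 3) k) (hf : f.IsHomogeneous d) :
    C (((d : k) - 1) ^ 2) * dX f * dY f
      = X 2 ^ 2 * (dZ (dX f) * dZ (dY f) - dY (dX f) * dZ (dZ f))
        + X 0 * X 1 * (dX (dX f) * dY (dY f) - dY (dX f) ^ 2)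
        - X 0 * X 2 * (dY (dX f) * dZ (dX f) - dX (dX f) * dZ (dY f))
        - X 1 * X 2 * (dY (dX f) * dZ (dY f) - dZ (dX f) * dY (dY f))
        + C ((d : k) * ((d : k) - 1)) * dY (dX f) * f :=
  stmt6_general d f hf
end

section
/- Let f ∈ k[x,y,z] be homogeneous of degree d ≥ 2 with char k = 0. Then (d-1)²·f_x² = −y²·Δ_zz − z²·Δ_yy + 2yz·Δ_yz + d(d-1)·f_xx·f, where Δ_yy = f_xx f_zz − f_xz², Δ_zz = f_xx f_yy − f_xy², Δ_yz = f_xy f_xz − f_xx f_yz. -/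
/-! Let `H` be the Hessian of `f` and `v = (x, y, z)`. Euler's identity, applied to `f` and to its
first partials, gives `H v = (d - 1) ∇f` and `vᵀ H v = d (d - 1) f`. For any symmetric `3 × 3`
matrix, `H₁₁ · vᵀ H v - (H v)₁² = y² Δ_zz + z² Δ_yy - 2 y z Δ_yz` is a ring identity; substituting
the two Euler relations into it gives the claim. -/

open MvPolynomial

namespace MvPolynomial

variable {R σ : Type*} [CommSemiring R]

theorem pderiv_pderiv_comm (i j : σ) (φ : MvPolynomial σ R) :
    pderiv i (pderiv j φ) = pderiv j (pderiv i φ) := by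
  classical
  induction φ using MvPolynomial.induction_on with
  | C a => simp
  | add p q hp hq => simp [hp, hq]
  | mul_X p s hp =>
    simp only [pderiv_mul, map_add, hp, pderiv_X]
    rcases eq_or_ne s i with rfl | hi <;> rcases eq_or_ne s j with rfl | hj <;>
      simp_all

theorem IsHomogeneous.sum_X_mul_sum_X_mul_pderiv_pderiv [Fintype σ] {n : ℕ}
    {φ : MvPolynomial σ R} (h : φ.IsHomogeneous n) :
    ∑ i, X i * ∑ j, X j * pderiv j (pderiv i φ) = (n * (n - 1)) • φ := by
  simp_rw [h.pderiv.sum_X_mul_pderiv, mul_smul_comm, ← Finset.smul_sum, h.sum_X_mul_pderiv,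
    smul_smul, mul_comm]

end MvPolynomial

theorem stmt7_general {k : Type*} [Field k] (d : ℕ) (hd : 2 ≤ d)
    (f : MvPolynomial (Fin 3) k) (hf : f.IsHomogeneous d) :
    C (((d : k) - 1) ^ 2) * dX f ^ 2
      = - X 1 ^ 2 * (dX (dX f) * dY (dY f) - dY (dX f) ^ 2)
        - X 2 ^ 2 * (dX (dX f) * dZ (dZ f) - dZ (dX f) ^ 2)
        + 2 * X 1 * X 2 * (dY (dX f) * dZ (dX f) - dX (dX f) * dZ (dY f))
        + C ((d : k) * ((d : k) - 1)) * dX (dX f) * f := by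
  have hcast : ((d - 1 : ℕ) : MvPolynomial (Fin 3) k) = C ((d : k) - 1) := by
    rw [← map_natCast C, Nat.cast_pred (by omega)]
  have euler_dX := (hf.pderiv (i := 0)).sum_X_mul_pderiv
  have euler_hessian := hf.sum_X_mul_sum_X_mul_pderiv_pderiv
  simp only [Fin.sum_univ_three, nsmul_eq_mul, Nat.cast_mul, hcast] at euler_dX euler_hessian
  rw [pderiv_pderiv_comm 0 1, pderiv_pderiv_comm 0 2, pderiv_pderiv_comm 1 2] at euler_hessian
  simp only [dX, dY, dZ, map_pow, map_mul, map_natCast]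
  rw [← mul_pow, ← euler_dX]
  linear_combination pderiv 0 (pderiv 0 f) * euler_hessian

theorem stmt7 {k : Type*} [Field k] [CharZero k] (d : ℕ) (hd : 2 ≤ d)
    (f : MvPolynomial (Fin 3) k) (hf : f.IsHomogeneous d) :
    C (((d : k) - 1) ^ 2) * dX f ^ 2
      = - X 1 ^ 2 * (dX (dX f) * dY (dY f) - dY (dX f) ^ 2)
        - X 2 ^ 2 * (dX (dX f) * dZ (dZ f) - dZ (dX f) ^ 2)
        + 2 * X 1 * X 2 * (dY (dX f) * dZ (dX f) - dX (dX f) * dZ (dY f))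
        + C ((d : k) * ((d : k) - 1)) * dX (dX f) * f :=
  stmt7_general d hd f hf
end
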